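/- For x > 0, 1/x + 1/x² - ψ'(x) < 1/(2x²) - 1/(6x³) + 1/(30x⁵), where ψ' is the trigamma function. -/

import Mathlib

/-!
The trigamma function satisfies `ψ'(t) - ψ'(t + 1) = 1 / t²`, and it is nonnegative on `(0, ∞)`
because `log Γ` is convex there. The truncated asymptotic expansion
`F(t) = 1/t + 1/(2t²) + 1/(6t³) - 1/(30t⁵)` satisfies `F(t) - F(t + 1) < 1 / t²` and tends to `0`.
Hence `ψ' - F` strictly decreases along `x, x + 1, x + 2, …` while staying above `-F(x + n) → 0`,
so `ψ'(x) > F(x)`, which is the claim rearranged. The differentiability of `ψ` needed for the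
functional equation of `ψ'` comes from the analyticity of `Γ` off its poles, as the reciprocal of
the entire function `1 / Γ`.
-/

open Real Filter Topology Set

noncomputable def digamma (x : ℝ) : ℝ := deriv Real.Gamma x / Real.Gamma x

noncomputable def trigamma (x : ℝ) : ℝ := deriv digamma x

theorem ne_neg_natCast_of_pos {R : Type*} [Field R] [LinearOrder R] [IsStrictOrderedRing R]
    {x : R} (hx : 0 < x) (m : ℕ) : x ≠ -m := by
  linarith [(Nat.cast_nonneg m : (0 : R) ≤ m)]

theorem Complex.analyticAt_Gamma {s : ℂ} (hs : ∀ m : ℕ, s ≠ -m) :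
    AnalyticAt ℂ Complex.Gamma s := by
  simpa using
    (differentiable_one_div_Gamma.analyticAt s).fun_inv (inv_ne_zero (Gamma_ne_zero hs))

theorem Real.analyticAt_Gamma {x : ℝ} (hx : ∀ m : ℕ, x ≠ -m) : AnalyticAt ℝ Gamma x := by
  have hx' : ∀ m : ℕ, (x : ℂ) ≠ -m := fun m => by exact_mod_cast hx m
  simpa [Complex.Gamma_ofReal] using (Complex.analyticAt_Gamma hx').re_ofReal

theorem analyticAt_digamma {x : ℝ} (hx : ∀ m : ℕ, x ≠ -m) : AnalyticAt ℝ digamma x :=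
  (analyticAt_Gamma hx).deriv.div (analyticAt_Gamma hx) (Gamma_ne_zero hx)

theorem hasDerivAt_digamma {x : ℝ} (hx : ∀ m : ℕ, x ≠ -m) :
    HasDerivAt digamma (trigamma x) x :=
  (analyticAt_digamma hx).differentiableAt.hasDerivAt

theorem hasDerivAt_log_Gamma {x : ℝ} (hx : ∀ m : ℕ, x ≠ -m) :
    HasDerivAt (fun y => log (Gamma y)) (digamma x) x :=
  (differentiableAt_Gamma hx).hasDerivAt.log (Gamma_ne_zero hx)

theorem digamma_add_one {x : ℝ} (hx : ∀ m : ℕ, x ≠ -m) :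
    digamma (x + 1) = digamma x + x⁻¹ := by
  have hx0 : x ≠ 0 := by simpa using hx 0
  have hΓ : HasDerivAt (fun y => Gamma (y + 1)) (Gamma x + x * deriv Gamma x) x := by
    refine ((hasDerivAt_id x).mul (differentiableAt_Gamma hx).hasDerivAt).congr_of_eventuallyEq
      ?_ |>.congr_deriv (by simp)
    filter_upwards [eventually_ne_nhds hx0] with y hy using Gamma_add_one hy
  rw [digamma, ← deriv_comp_add_const, hΓ.deriv, Gamma_add_one hx0, digamma]
  field_simp [Gamma_ne_zero hx]
  ring

theorem monotoneOn_digamma : MonotoneOn digamma (Ioi 0) := by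
  have hlog (x : ℝ) (hx : x ∈ Ioi 0) := hasDerivAt_log_Gamma (ne_neg_natCast_of_pos hx)
  exact (convexOn_log_Gamma.monotoneOn_deriv fun x hx => (hlog x hx).differentiableAt).congr
    fun x hx => (hlog x hx).deriv

theorem trigamma_add_one {x : ℝ} (hx : 0 < x) : trigamma (x + 1) = trigamma x - (x ^ 2)⁻¹ := by
  have hshift : HasDerivAt (fun y => digamma (y + 1)) (trigamma x - (x ^ 2)⁻¹) x := by
    refine ((hasDerivAt_digamma (ne_neg_natCast_of_pos hx)).add
      (hasDerivAt_inv hx.ne')).congr_of_eventuallyEq ?_ |>.congr_deriv (by ring)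
    filter_upwards [eventually_gt_nhds hx] with y hy
      using digamma_add_one (ne_neg_natCast_of_pos hy)
  rw [trigamma, ← deriv_comp_add_const, hshift.deriv]

theorem trigamma_nonneg {x : ℝ} (hx : 0 < x) : 0 ≤ trigamma x := by
  rw [trigamma, ← derivWithin_of_isOpen isOpen_Ioi hx]
  exact monotoneOn_digamma.derivWithin_nonneg

theorem lt_of_forall_sub_add_one_lt {f g : ℝ → ℝ} {x : ℝ}
    (hstep : ∀ t, x ≤ t → g t - g (t + 1) < f t - f (t + 1))
    (hf : ∀ t, x ≤ t → 0 ≤ f t) (hg : Tendsto g atTop (𝓝 0)) : g x < f x := by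
  set a : ℕ → ℝ := fun n => f (x + 1 + n) - g (x + 1 + n)
  have hxn (n : ℕ) : x ≤ x + 1 + n := by linarith [(n.cast_nonneg : (0 : ℝ) ≤ n)]
  have ha : Antitone a := antitone_nat_of_succ_le fun n => by
    have := hstep (x + 1 + n) (hxn n)
    simp only [a, Nat.cast_succ, ← add_assoc]
    linarith
  have hlim : Tendsto (fun n : ℕ => -g (x + 1 + n)) atTop (𝓝 0) := by
    simpa using (hg.comp (tendsto_atTop_add_const_left _ _ tendsto_natCast_atTop_atTop)).neg
  have ha0 : 0 ≤ a 0 := le_of_tendsto' hlim fun n => by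
    have := hf (x + 1 + n) (hxn n)
    linarith [ha (Nat.zero_le n)]
  have := hstep x le_rfl
  simp only [a, Nat.cast_zero, add_zero] at ha0
  linarith

/-- The asymptotic expansion `ψ'(t) ~ 1/t + 1/(2t²) + ∑ B₂ₖ / t²ᵏ⁺¹`, truncated after `B₄`. -/
noncomputable def trigammaApprox (t : ℝ) : ℝ := t⁻¹ + t⁻¹ ^ 2 / 2 + t⁻¹ ^ 3 / 6 - t⁻¹ ^ 5 / 30

theorem trigammaApprox_sub_add_one_lt {t : ℝ} (ht : 0 < t) :
    trigammaApprox t - trigammaApprox (t + 1) < (t ^ 2)⁻¹ := by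
  have key : (t ^ 2)⁻¹ - (trigammaApprox t - trigammaApprox (t + 1)) =
      (5 * t ^ 2 + 5 * t + 1) / (30 * t ^ 5 * (t + 1) ^ 5) := by
    unfold trigammaApprox
    field_simp
    ring
  have : 0 < (5 * t ^ 2 + 5 * t + 1) / (30 * t ^ 5 * (t + 1) ^ 5) := by positivity
  linarith

theorem tendsto_trigammaApprox_atTop : Tendsto trigammaApprox atTop (𝓝 0) := by
  have hpoly : Continuous fun s : ℝ => s + s ^ 2 / 2 + s ^ 3 / 6 - s ^ 5 / 30 := by fun_prop
  exact (hpoly.tendsto' 0 0 (by norm_num)).comp tendsto_inv_atTop_zero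

theorem trigammaApprox_lt_trigamma {x : ℝ} (hx : 0 < x) : trigammaApprox x < trigamma x := by
  refine lt_of_forall_sub_add_one_lt (fun t ht => ?_)
    (fun t ht => trigamma_nonneg (hx.trans_le ht)) tendsto_trigammaApprox_atTop
  rw [trigamma_add_one (hx.trans_le ht)]
  linarith [trigammaApprox_sub_add_one_lt (hx.trans_le ht)]

theorem trigamma_lower (x : ℝ) (hx : 0 < x) :
    1 / x + 1 / x ^ 2 - trigamma x <
      1 / (2 * x ^ 2) - 1 / (6 * x ^ 3) + 1 / (30 * x ^ 5) := by
  have hrearrange : 1 / x + 1 / x ^ 2 - (1 / (2 * x ^ 2) - 1 / (6 * x ^ 3) + 1 / (30 * x ^ 5)) =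
      trigammaApprox x := by
    unfold trigammaApprox
    ring
  linarith [trigammaApprox_lt_trigamma hx]
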